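/- arXiv:2209.07481 — 6 statements merged into one kernel-verified Lean document; each statement's English description precedes it below -/
import Mathlib

section
/- Let f : ℝ → ℝ be differentiable and strictly convex, and D_f the Bregman divergence it generates. Given a₁,…,a_N ∈ ℝ and weights β₁,…,β_N ≥ 0 with ∑βᵢ = 1, the function μ ↦ ∑ᵢ βᵢ D_f(aᵢ, μ) attains its unique minimum at μ* = ∑ᵢ βᵢ aᵢ, the arithmetic mean of the inputs. -/
/-!
Since `D_f(a, c) - f(a)` is affine in `a`, averaging against weights of total mass one gives the
compensation identity `∑ βᵢ D_f(aᵢ, c) = ∑ βᵢ D_f(aᵢ, m) + D_f(m, c)` with `m = ∑ βᵢ aᵢ`.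
Strict convexity makes `D_f(m, c)` positive for `c ≠ m`.
-/

/-- Scalar Bregman divergence generated by `f`. -/
noncomputable def breg (f : ℝ → ℝ) (a b : ℝ) : ℝ := f a - f b - (a - b) * deriv f b

lemma breg_pos_of_ne {f : ℝ → ℝ} (hconv : StrictConvexOn ℝ Set.univ f) {x y : ℝ}
    (hf : DifferentiableAt ℝ f y) (hxy : x ≠ y) : 0 < breg f x y := by
  unfold breg
  rcases hxy.lt_or_gt with h | h
  · have hslope := hconv.slope_lt_deriv (Set.mem_univ x) (Set.mem_univ y) h hf
    rw [slope_def_field, div_lt_iff₀ (by linarith)] at hslope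
    nlinarith
  · have hslope := hconv.deriv_lt_slope (Set.mem_univ y) (Set.mem_univ x) h hf
    rw [slope_def_field, lt_div_iff₀ (by linarith)] at hslope
    nlinarith

section WeightedSum

variable (f : ℝ → ℝ) {ι : Type*} (s : Finset ι) (β a : ι → ℝ)

lemma sum_mul_breg_eq (hsum : ∑ i ∈ s, β i = 1) (c : ℝ) :
    ∑ i ∈ s, β i * breg f (a i) c
      = ∑ i ∈ s, β i * f (a i) - f c - (∑ i ∈ s, β i * a i - c) * deriv f c := by
  have hterm : ∀ i, β i * breg f (a i) c
      = β i * f (a i) - β i * (f c - c * deriv f c) - β i * a i * deriv f c := by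
    intro i
    simp only [breg]
    ring
  rw [Finset.sum_congr rfl fun i _ => hterm i, Finset.sum_sub_distrib, Finset.sum_sub_distrib,
    ← Finset.sum_mul, ← Finset.sum_mul, hsum]
  ring

lemma sum_mul_breg_eq_sum_mul_breg_add_breg (hsum : ∑ i ∈ s, β i = 1) (c : ℝ) :
    ∑ i ∈ s, β i * breg f (a i) c
      = ∑ i ∈ s, β i * breg f (a i) (∑ j ∈ s, β j * a j) + breg f (∑ j ∈ s, β j * a j) c := by
  rw [sum_mul_breg_eq f s β a hsum, sum_mul_breg_eq f s β a hsum, breg]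
  ring

end WeightedSum

theorem breg_expected_unique_min_arithmetic_mean_general (f : ℝ → ℝ)
    (hdiff : Differentiable ℝ f) (hconv : StrictConvexOn ℝ Set.univ f)
    {N : ℕ} (a : Fin N → ℝ)
    (β : Fin N → ℝ) (hsum : ∑ i, β i = 1) :
    ∀ μ : ℝ, μ ≠ ∑ i, β i * a i →
      ∑ i, β i * breg f (a i) (∑ j, β j * a j) < ∑ i, β i * breg f (a i) μ := by
  intro μ hμ
  rw [sum_mul_breg_eq_sum_mul_breg_add_breg f Finset.univ β a hsum μ]
  exact lt_add_of_pos_right _ (breg_pos_of_ne hconv (hdiff μ) hμ.symm)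

/-- The arithmetic mean is the unique minimizer of the expected Bregman divergence
in the second argument. -/
theorem breg_expected_unique_min_arithmetic_mean (f : ℝ → ℝ)
    (hdiff : Differentiable ℝ f) (hconv : StrictConvexOn ℝ Set.univ f)
    {N : ℕ} (a : Fin N → ℝ)
    (β : Fin N → ℝ) (hβ : ∀ i, 0 ≤ β i) (hsum : ∑ i, β i = 1) :
    ∀ μ : ℝ, μ ≠ ∑ i, β i * a i →
      ∑ i, β i * breg f (a i) (∑ j, β j * a j) < ∑ i, β i * breg f (a i) μ :=
  breg_expected_unique_min_arithmetic_mean_general f hdiff hconv a β hsum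
end

section
/- Let f : ℝ → ℝ be differentiable and convex with Bregman divergence D_f, inputs a₁,…,a_N ∈ ℝ, weights βᵢ ≥ 0 with ∑βᵢ = 1, μ* = ∑ᵢ βᵢ aᵢ, and let μ ∈ ℝ be arbitrary. Then ∑ᵢ βᵢ D_f(aᵢ, μ) − ∑ᵢ βᵢ D_f(aᵢ, μ*) = D_f(μ*, μ); i.e., the suboptimality of any representative μ is exactly the Bregman divergence from the mean to μ (bias–variance decomposition for Bregman divergences). -/
open Finset

theorem sum_mul_breg {ι : Type*} (s : Finset ι) (f : ℝ → ℝ) (a β : ι → ℝ)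
    (hsum : ∑ i ∈ s, β i = 1) (c : ℝ) :
    ∑ i ∈ s, β i * breg f (a i) c =
      ∑ i ∈ s, β i * f (a i) - f c - (∑ i ∈ s, β i * a i - c) * deriv f c := by
  have hterm : ∀ i, β i * breg f (a i) c =
      β i * f (a i) - β i * f c - (β i * a i - β i * c) * deriv f c := fun i => by
    rw [breg]; ring
  simp only [hterm, sum_sub_distrib, ← sum_mul, hsum, one_mul]

theorem breg_bias_variance_general (f : ℝ → ℝ)
    {N : ℕ} (a : Fin N → ℝ)
    (β : Fin N → ℝ) (hsum : ∑ i, β i = 1) (μ : ℝ) :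
    ∑ i, β i * breg f (a i) μ - ∑ i, β i * breg f (a i) (∑ j, β j * a j) =
      breg f (∑ j, β j * a j) μ := by
  rw [sum_mul_breg _ f a β hsum, sum_mul_breg _ f a β hsum, breg]
  ring

/-- Bias–variance decomposition for Bregman divergences: the suboptimality of any
representative `μ` equals the Bregman divergence from the mean to `μ`. -/
theorem breg_bias_variance (f : ℝ → ℝ)
    (hdiff : Differentiable ℝ f) (hconv : ConvexOn ℝ Set.univ f)
    {N : ℕ} (a : Fin N → ℝ)
    (β : Fin N → ℝ) (hβ : ∀ i, 0 ≤ β i) (hsum : ∑ i, β i = 1) (μ : ℝ) :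
    ∑ i, β i * breg f (a i) μ - ∑ i, β i * breg f (a i) (∑ j, β j * a j) =
      breg f (∑ j, β j * a j) μ :=
  breg_bias_variance_general f a β hsum μ
end

section
/- Let F : ℝ^d → ℝ be differentiable and strictly convex, ρ : I → ℝ a strictly monotonic continuous function applied coordinatewise to vectors in I^d, and D_F(x,y) = F(x) − F(y) − ⟨x − y, ∇F(y)⟩. For inputs u₁,…,u_N ∈ I^d and weights βᵢ ≥ 0 with ∑βᵢ = 1 such that ∑ᵢ βᵢ ρ(uᵢ) lies coordinatewise in ρ(I), the map μ ↦ ∑ᵢ βᵢ D_F(ρ(uᵢ), ρ(μ)) has unique minimizer μ* with ρ(μ*) = ∑ᵢ βᵢ ρ(uᵢ), and ∑ᵢ βᵢ D_F(ρ(uᵢ), ρ(μ)) − ∑ᵢ βᵢ D_F(ρ(uᵢ), ρ(μ*)) = D_F(ρ(μ*), ρ(μ)) for all μ. -/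
/-! With `m = ∑ βᵢ xᵢ` and `∑ βᵢ = 1`, linearity of the derivative gives
`∑ βᵢ D_F(xᵢ, w) = ∑ βᵢ F(xᵢ) - F(w) - DF(w)(m - w)`; subtracting the case `w = m` leaves exactly
`D_F(m, w)`, which strict convexity makes positive for `w ≠ m`. Here `xᵢ = ρ(uᵢ)` and `w = ρ(μ)`,
and `ρ(μ) ≠ ρ(μ*)` for `μ ≠ μ*` because `ρ` is injective on `I`. -/

/-- Vector Bregman divergence on `ℝ^d` generated by `F`. -/
noncomputable def bregV {d : ℕ} (F : (Fin d → ℝ) → ℝ) (x y : Fin d → ℝ) : ℝ :=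
  F x - F y - fderiv ℝ F y (x - y)

open Set Finset

theorem StrictConvexOn.comp_affineMap {𝕜 E F β : Type*} [Field 𝕜] [LinearOrder 𝕜]
    [IsStrictOrderedRing 𝕜] [AddCommGroup E] [AddCommGroup F] [Module 𝕜 E] [Module 𝕜 F]
    [AddCommMonoid β] [PartialOrder β] [SMul 𝕜 β] {f : F → β} {g : E →ᵃ[𝕜] F}
    (hg : Function.Injective g) {s : Set F} (hf : StrictConvexOn 𝕜 s f) :
    StrictConvexOn 𝕜 (g ⁻¹' s) (f ∘ g) :=
  ⟨hf.1.affine_preimage g, fun x hx y hy hxy a b ha hb hab => by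
    simpa only [Function.comp_apply, Convex.combo_affine_apply hab]
      using hf.2 hx hy (hg.ne hxy) ha hb hab⟩

section Bregman

variable {E : Type*} [NormedAddCommGroup E] [NormedSpace ℝ E]

/-- `bregV` is this divergence on `Fin d → ℝ`, definitionally. -/
noncomputable def bregmanDiv (F : E → ℝ) (x y : E) : ℝ :=
  F x - F y - fderiv ℝ F y (x - y)

/-- Restricted to the line through `y` and `x`, a strictly convex function lies strictly above
its tangent at `y`. -/
theorem bregmanDiv_pos {F : E → ℝ} {s : Set E} (hF : StrictConvexOn ℝ s F) {x y : E}
    (hx : x ∈ s) (hy : y ∈ s) (hFy : DifferentiableAt ℝ F y) (hxy : x ≠ y) :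
    0 < bregmanDiv F x y := by
  have hline : StrictConvexOn ℝ (AffineMap.lineMap y x ⁻¹' s) (F ∘ AffineMap.lineMap y x) :=
    hF.comp_affineMap (AffineMap.lineMap_injective ℝ hxy.symm)
  have hderiv : HasDerivAt (F ∘ AffineMap.lineMap (k := ℝ) y x) (fderiv ℝ F y (x - y)) 0 :=
    hFy.hasFDerivAt.comp_hasDerivAt_of_eq 0 AffineMap.hasDerivAt_lineMap
      (AffineMap.lineMap_apply_zero y x).symm
  have hslope := hline.lt_slope_of_hasDerivAt (by simpa using hy) (by simpa using hx) one_pos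
    hderiv
  simp only [slope_def_field, Function.comp_apply, AffineMap.lineMap_apply_zero,
    AffineMap.lineMap_apply_one, sub_zero, div_one] at hslope
  rw [bregmanDiv]
  linarith

theorem sum_mul_bregmanDiv {ι : Type*} (s : Finset ι) (F : E → ℝ) (β : ι → ℝ)
    (hβ : ∑ i ∈ s, β i = 1) (x : ι → E) (w : E) :
    ∑ i ∈ s, β i * bregmanDiv F (x i) w =
      ∑ i ∈ s, β i * F (x i) - F w - fderiv ℝ F w (∑ i ∈ s, β i • x i - w) := by
  have hlin : ∑ i ∈ s, β i * fderiv ℝ F w (x i - w) =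
      fderiv ℝ F w (∑ i ∈ s, β i • x i - w) :=
    calc ∑ i ∈ s, β i * fderiv ℝ F w (x i - w)
        = fderiv ℝ F w (∑ i ∈ s, β i • (x i - w)) := by
          simp only [map_sum, map_smul, smul_eq_mul]
      _ = fderiv ℝ F w (∑ i ∈ s, β i • x i - w) := by
          simp only [smul_sub, sum_sub_distrib, ← sum_smul, hβ, one_smul]
  simp only [bregmanDiv, mul_sub, sum_sub_distrib, ← sum_mul, hβ, one_mul, hlin]

theorem sum_mul_bregmanDiv_sub_sum_mul_bregmanDiv_wmean {ι : Type*} (s : Finset ι)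
    (F : E → ℝ) (β : ι → ℝ) (hβ : ∑ i ∈ s, β i = 1) (x : ι → E) (w : E) :
    ∑ i ∈ s, β i * bregmanDiv F (x i) w -
        ∑ i ∈ s, β i * bregmanDiv F (x i) (∑ i ∈ s, β i • x i) =
      bregmanDiv F (∑ i ∈ s, β i • x i) w := by
  rw [sum_mul_bregmanDiv s F β hβ, sum_mul_bregmanDiv s F β hβ, sub_self, map_zero, bregmanDiv]
  ring

end Bregman

theorem bregV_quasiArithmeticMean_general {d : ℕ} (F : (Fin d → ℝ) → ℝ)
    (hFdiff : Differentiable ℝ F) (hFconv : StrictConvexOn ℝ Set.univ F)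
    {I : Set ℝ} (ρ : ℝ → ℝ) (hmono : StrictMonoOn ρ I ∨ StrictAntiOn ρ I)
    {N : ℕ} (u : Fin N → (Fin d → ℝ))
    (β : Fin N → ℝ) (hsum : ∑ i, β i = 1)
    (μstar : Fin d → ℝ) (hμI : ∀ j, μstar j ∈ I)
    (hμ : (fun j => ρ (μstar j)) = ∑ i, β i • (fun j => ρ (u i j))) :
    (∀ μ : Fin d → ℝ, (∀ j, μ j ∈ I) → μ ≠ μstar →
      ∑ i, β i * bregV F (fun j => ρ (u i j)) (fun j => ρ (μstar j)) <
        ∑ i, β i * bregV F (fun j => ρ (u i j)) (fun j => ρ (μ j))) ∧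
    (∀ μ : Fin d → ℝ, (∀ j, μ j ∈ I) →
      ∑ i, β i * bregV F (fun j => ρ (u i j)) (fun j => ρ (μ j)) -
        ∑ i, β i * bregV F (fun j => ρ (u i j)) (fun j => ρ (μstar j)) =
        bregV F (fun j => ρ (μstar j)) (fun j => ρ (μ j))) := by
  have hexcess : ∀ μ : Fin d → ℝ,
      ∑ i, β i * bregV F (fun j => ρ (u i j)) (fun j => ρ (μ j)) -
        ∑ i, β i * bregV F (fun j => ρ (u i j)) (fun j => ρ (μstar j)) =
        bregV F (fun j => ρ (μstar j)) (fun j => ρ (μ j)) := by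
    intro μ
    rw [hμ]
    exact sum_mul_bregmanDiv_sub_sum_mul_bregmanDiv_wmean univ F β hsum _ _
  refine ⟨fun μ hμI' hne => ?_, fun μ _ => hexcess μ⟩
  have hinj : InjOn ρ I := hmono.elim StrictMonoOn.injOn StrictAntiOn.injOn
  have hρne : (fun j => ρ (μstar j)) ≠ fun j => ρ (μ j) := fun h =>
    hne (funext fun j => hinj (hμI' j) (hμI j) (congrFun h j).symm)
  have hpos : 0 < bregV F (fun j => ρ (μstar j)) (fun j => ρ (μ j)) :=
    bregmanDiv_pos hFconv (mem_univ _) (mem_univ _) (hFdiff _) hρne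
  linarith [hexcess μ]

/-- Vector-valued rho-tau Bregman Information: with `ρ` applied coordinatewise,
`μ*` with `ρ(μ*) = ∑ βᵢ ρ(uᵢ)` uniquely minimizes the expected Bregman divergence,
and the suboptimality of any `μ` is `D_F(ρ(μ*), ρ(μ))`. -/
theorem bregV_quasiArithmeticMean {d : ℕ} (F : (Fin d → ℝ) → ℝ)
    (hFdiff : Differentiable ℝ F) (hFconv : StrictConvexOn ℝ Set.univ F)
    {I : Set ℝ} (ρ : ℝ → ℝ) (hmono : StrictMonoOn ρ I ∨ StrictAntiOn ρ I)
    (hcont : ContinuousOn ρ I)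
    {N : ℕ} (u : Fin N → (Fin d → ℝ)) (hu : ∀ i j, u i j ∈ I)
    (β : Fin N → ℝ) (hβ : ∀ i, 0 ≤ β i) (hsum : ∑ i, β i = 1)
    (μstar : Fin d → ℝ) (hμI : ∀ j, μstar j ∈ I)
    (hμ : (fun j => ρ (μstar j)) = ∑ i, β i • (fun j => ρ (u i j))) :
    (∀ μ : Fin d → ℝ, (∀ j, μ j ∈ I) → μ ≠ μstar →
      ∑ i, β i * bregV F (fun j => ρ (u i j)) (fun j => ρ (μstar j)) <
        ∑ i, β i * bregV F (fun j => ρ (u i j)) (fun j => ρ (μ j))) ∧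
    (∀ μ : Fin d → ℝ, (∀ j, μ j ∈ I) →
      ∑ i, β i * bregV F (fun j => ρ (u i j)) (fun j => ρ (μ j)) -
        ∑ i, β i * bregV F (fun j => ρ (u i j)) (fun j => ρ (μstar j)) =
        bregV F (fun j => ρ (μstar j)) (fun j => ρ (μ j))) :=
  bregV_quasiArithmeticMean_general F hFdiff hFconv ρ hmono u β hsum μstar hμI hμ
end

section
/- Let π₀, π₁ : X → (0,∞) be integrable densities, β ∈ (0,1), and define π_β^{geo} = π₀^{1−β} π₁^β. Then π_β^{geo} minimizes, over positive measurable π, the functional π ↦ (1−β)·D_KL[π:π₀] + β·D_KL[π:π₁], where D_KL[p:q] = ∫ p log(p/q) − ∫p + ∫q (unnormalized KL divergence); and the minimum value equals (1−β)∫π₀ + β∫π₁ − ∫π₀^{1−β}π₁^β. -/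
/-!
Pointwise, `(1 - β) log (π / π₀) + β log (π / π₁) = log (π / π^geo)`, so the objective equals
`D_KL[π : π^geo] + (1 - β) ∫ π₀ + β ∫ π₁ - ∫ π^geo`. The unnormalized divergence is nonnegative
(its integrand `t log (t / s) - t + s` is, by `log x ≥ 1 - 1 / x`) and vanishes at `π = π^geo`.
-/

open MeasureTheory

/-- Unnormalized KL divergence `D_KL[p:q] = ∫ p log(p/q) − ∫p + ∫q`. -/
noncomputable def DKL {X : Type*} [MeasurableSpace X] (μ : Measure X) (p q : X → ℝ) : ℝ :=
  (∫ x, p x * Real.log (p x / q x) ∂μ) - (∫ x, p x ∂μ) + (∫ x, q x ∂μ)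

lemma sub_le_mul_log_div {t s : ℝ} (ht : 0 < t) (hs : 0 < s) :
    t - s ≤ t * Real.log (t / s) := by
  have h := mul_le_mul_of_nonneg_left (Real.one_sub_inv_le_log_of_pos (div_pos ht hs)) ht.le
  rwa [inv_div, mul_sub, mul_one, mul_div_cancel₀ s ht.ne'] at h

lemma mul_log_div_rpow_mul_rpow {a b c : ℝ} (β : ℝ) (ha : 0 < a) (hb : 0 < b) (hc : 0 < c) :
    a * Real.log (a / (b ^ (1 - β) * c ^ β)) =
      (1 - β) * (a * Real.log (a / b)) + β * (a * Real.log (a / c)) := by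
  rw [Real.log_div ha.ne' hb.ne', Real.log_div ha.ne' hc.ne', Real.log_div ha.ne' (by positivity),
    Real.log_mul (by positivity) (by positivity), Real.log_rpow hb, Real.log_rpow hc]
  ring

lemma mul_log_div_geometric_eq {X : Type*} {π π₀ π₁ : X → ℝ} (β : ℝ)
    (hπ : ∀ x, 0 < π x) (h0 : ∀ x, 0 < π₀ x) (h1 : ∀ x, 0 < π₁ x) :
    (fun x => π x * Real.log (π x / (π₀ x ^ (1 - β) * π₁ x ^ β))) =
      fun x => (1 - β) * (π x * Real.log (π x / π₀ x)) + β * (π x * Real.log (π x / π₁ x)) :=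
  funext fun x => mul_log_div_rpow_mul_rpow β (hπ x) (h0 x) (h1 x)

section DKL

variable {X : Type*} [MeasurableSpace X] {μ : Measure X}

lemma DKL_self (p : X → ℝ) : DKL μ p p = 0 := by
  simp [DKL]

lemma DKL_nonneg {p q : X → ℝ} (hp : ∀ x, 0 < p x) (hq : ∀ x, 0 < q x)
    (hip : Integrable p μ) (hiq : Integrable q μ)
    (hil : Integrable (fun x => p x * Real.log (p x / q x)) μ) : 0 ≤ DKL μ p q := by
  have h : 0 ≤ ∫ x, (p x * Real.log (p x / q x) - p x + q x) ∂μ :=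
    integral_nonneg fun x => show 0 ≤ _ by linarith [sub_le_mul_log_div (hp x) (hq x)]
  have hil' : Integrable (fun x => p x * Real.log (p x / q x) - p x) μ := hil.sub hip
  rwa [integral_add hil' hiq, integral_sub hil hip] at h

variable {π π₀ π₁ : X → ℝ} (β : ℝ)

lemma integrable_mul_log_div_geometric (hπ : ∀ x, 0 < π x) (h0 : ∀ x, 0 < π₀ x)
    (h1 : ∀ x, 0 < π₁ x) (hil0 : Integrable (fun x => π x * Real.log (π x / π₀ x)) μ)
    (hil1 : Integrable (fun x => π x * Real.log (π x / π₁ x)) μ) :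
    Integrable (fun x => π x * Real.log (π x / (π₀ x ^ (1 - β) * π₁ x ^ β))) μ := by
  rw [mul_log_div_geometric_eq β hπ h0 h1]
  exact (hil0.const_mul _).add (hil1.const_mul _)

lemma weighted_DKL_eq_DKL_geometric (hπ : ∀ x, 0 < π x) (h0 : ∀ x, 0 < π₀ x)
    (h1 : ∀ x, 0 < π₁ x) (hil0 : Integrable (fun x => π x * Real.log (π x / π₀ x)) μ)
    (hil1 : Integrable (fun x => π x * Real.log (π x / π₁ x)) μ) :
    (1 - β) * DKL μ π π₀ + β * DKL μ π π₁ =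
      DKL μ π (fun x => π₀ x ^ (1 - β) * π₁ x ^ β) +
        ((1 - β) * (∫ x, π₀ x ∂μ) + β * (∫ x, π₁ x ∂μ) -
          ∫ x, π₀ x ^ (1 - β) * π₁ x ^ β ∂μ) := by
  have h : ∫ x, π x * Real.log (π x / (π₀ x ^ (1 - β) * π₁ x ^ β)) ∂μ =
      (1 - β) * (∫ x, π x * Real.log (π x / π₀ x) ∂μ) +
        β * ∫ x, π x * Real.log (π x / π₁ x) ∂μ := by
    rw [mul_log_div_geometric_eq β hπ h0 h1, integral_add (hil0.const_mul _) (hil1.const_mul _),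
      integral_const_mul, integral_const_mul]
  simp only [DKL, h]
  ring

end DKL

theorem geometric_path_minimizes_expected_reverse_KL_general {X : Type*} [MeasurableSpace X]
    (μ : Measure X)
    (π₀ π₁ : X → ℝ) (h0 : ∀ x, 0 < π₀ x) (h1 : ∀ x, 0 < π₁ x)
    (β : ℝ)
    (hgi : Integrable (fun x => π₀ x ^ (1 - β) * π₁ x ^ β) μ)
    (hgl0 : Integrable (fun x => (π₀ x ^ (1 - β) * π₁ x ^ β) *
      Real.log ((π₀ x ^ (1 - β) * π₁ x ^ β) / π₀ x)) μ)
    (hgl1 : Integrable (fun x => (π₀ x ^ (1 - β) * π₁ x ^ β) *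
      Real.log ((π₀ x ^ (1 - β) * π₁ x ^ β) / π₁ x)) μ) :
    (∀ π : X → ℝ, Measurable π → (∀ x, 0 < π x) → Integrable π μ →
      Integrable (fun x => π x * Real.log (π x / π₀ x)) μ →
      Integrable (fun x => π x * Real.log (π x / π₁ x)) μ →
      (1 - β) * DKL μ (fun x => π₀ x ^ (1 - β) * π₁ x ^ β) π₀ +
        β * DKL μ (fun x => π₀ x ^ (1 - β) * π₁ x ^ β) π₁ ≤
        (1 - β) * DKL μ π π₀ + β * DKL μ π π₁) ∧
    (1 - β) * DKL μ (fun x => π₀ x ^ (1 - β) * π₁ x ^ β) π₀ +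
        β * DKL μ (fun x => π₀ x ^ (1 - β) * π₁ x ^ β) π₁ =
      (1 - β) * (∫ x, π₀ x ∂μ) + β * (∫ x, π₁ x ∂μ) -
        ∫ x, π₀ x ^ (1 - β) * π₁ x ^ β ∂μ := by
  have hg : ∀ x, 0 < π₀ x ^ (1 - β) * π₁ x ^ β := fun x => by
    have := h0 x; have := h1 x; positivity
  have hval := weighted_DKL_eq_DKL_geometric β hg h0 h1 hgl0 hgl1
  rw [DKL_self, zero_add] at hval
  refine ⟨fun π _ hπ hiπ hil0 hil1 => ?_, hval⟩
  rw [hval, weighted_DKL_eq_DKL_geometric β hπ h0 h1 hil0 hil1, le_add_iff_nonneg_left]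
  exact DKL_nonneg hπ hg hiπ hgi (integrable_mul_log_div_geometric β hπ h0 h1 hil0 hil1)

/-- The geometric path minimizes `π ↦ (1−β) D_KL[π:π₀] + β D_KL[π:π₁]`, and its
minimum value is `(1−β)∫π₀ + β∫π₁ − ∫π₀^{1−β}π₁^β`. -/
theorem geometric_path_minimizes_expected_reverse_KL {X : Type*} [MeasurableSpace X]
    (μ : Measure X) [SigmaFinite μ]
    (π₀ π₁ : X → ℝ) (h0 : ∀ x, 0 < π₀ x) (h1 : ∀ x, 0 < π₁ x)
    (hm0 : Measurable π₀) (hm1 : Measurable π₁)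
    (hi0 : Integrable π₀ μ) (hi1 : Integrable π₁ μ)
    (β : ℝ) (hβ : β ∈ Set.Ioo (0:ℝ) 1)
    (hgi : Integrable (fun x => π₀ x ^ (1 - β) * π₁ x ^ β) μ)
    (hgl0 : Integrable (fun x => (π₀ x ^ (1 - β) * π₁ x ^ β) *
      Real.log ((π₀ x ^ (1 - β) * π₁ x ^ β) / π₀ x)) μ)
    (hgl1 : Integrable (fun x => (π₀ x ^ (1 - β) * π₁ x ^ β) *
      Real.log ((π₀ x ^ (1 - β) * π₁ x ^ β) / π₁ x)) μ) :
    (∀ π : X → ℝ, Measurable π → (∀ x, 0 < π x) → Integrable π μ →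
      Integrable (fun x => π x * Real.log (π x / π₀ x)) μ →
      Integrable (fun x => π x * Real.log (π x / π₁ x)) μ →
      (1 - β) * DKL μ (fun x => π₀ x ^ (1 - β) * π₁ x ^ β) π₀ +
        β * DKL μ (fun x => π₀ x ^ (1 - β) * π₁ x ^ β) π₁ ≤
        (1 - β) * DKL μ π π₀ + β * DKL μ π π₁) ∧
    (1 - β) * DKL μ (fun x => π₀ x ^ (1 - β) * π₁ x ^ β) π₀ +
        β * DKL μ (fun x => π₀ x ^ (1 - β) * π₁ x ^ β) π₁ =
      (1 - β) * (∫ x, π₀ x ∂μ) + β * (∫ x, π₁ x ∂μ) -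
        ∫ x, π₀ x ^ (1 - β) * π₁ x ^ β ∂μ :=
  geometric_path_minimizes_expected_reverse_KL_general μ π₀ π₁ h0 h1 β hgi hgl0 hgl1
end

section
/- Fix q ∈ (0,1) and let ρ_q(u) = log_q(u) = (u^{1−q} − 1)/(1−q) and f(r) = (1/q)(exp_q(r) − r − 1) on the range of ρ_q. Then for a, b > 0, the scalar Bregman divergence satisfies D_f(ρ_q(a), ρ_q(b)) = (1/q)a + (1/(1−q))b − (1/(q(1−q))) a^{1−q} b^q, the pointwise integrand of Amari's α-divergence of order q. -/
noncomputable def logq (q u : ℝ) : ℝ := (u ^ (1 - q) - 1) / (1 - q)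

noncomputable def expq (q t : ℝ) : ℝ := (max (1 + (1 - q) * t) 0) ^ (1 / (1 - q))

/-! Since `exp_q' = exp_q ^ q` and `exp_q ∘ log_q = id`, the derivative of the generator at
`log_q b` is `(b ^ q - 1) / q`; the divergence is then a rational expression in `a`, `b ^ q` and
the powers `a ^ (1 - q)`, `b ^ (1 - q)`, which collapses using `b ^ q * b ^ (1 - q) = b`. -/

lemma one_add_mul_logq {q : ℝ} (hq : q ≠ 1) (u : ℝ) :
    1 + (1 - q) * logq q u = u ^ (1 - q) := by
  have : 1 - q ≠ 0 := sub_ne_zero.mpr hq.symm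
  unfold logq
  field_simp
  ring

lemma expq_logq {q u : ℝ} (hq : q ≠ 1) (hu : 0 ≤ u) : expq q (logq q u) = u := by
  rw [expq, one_add_mul_logq hq, max_eq_left (Real.rpow_nonneg hu _), one_div,
    Real.rpow_rpow_inv hu (sub_ne_zero.mpr hq.symm)]

lemma hasDerivAt_expq {q t : ℝ} (hq : q ≠ 1) (ht : 0 < 1 + (1 - q) * t) :
    HasDerivAt (expq q) (expq q t ^ q) t := by
  have h1q : 1 - q ≠ 0 := sub_ne_zero.mpr hq.symm
  have hpow : HasDerivAt (fun s => (1 + (1 - q) * s) ^ (1 / (1 - q)))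
      ((1 + (1 - q) * t) ^ (1 / (1 - q) - 1) * (1 / (1 - q)) * (1 - q)) t := by
    have hlin : HasDerivAt (fun s : ℝ => 1 + (1 - q) * s) (1 - q) t := by
      simpa using ((hasDerivAt_id t).const_mul (1 - q)).const_add 1
    simpa [mul_comm, mul_left_comm, mul_assoc] using
      (hlin.rpow_const (p := 1 / (1 - q)) (Or.inl ht.ne'))
  have hlocal : (fun s => (1 + (1 - q) * s) ^ (1 / (1 - q))) =ᶠ[nhds t] expq q := by
    have hcont : Continuous fun s : ℝ => 1 + (1 - q) * s := by fun_prop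
    filter_upwards [(hcont.tendsto t).eventually (eventually_gt_nhds ht)] with s hs
    rw [expq, max_eq_left hs.le]
  refine (hpow.congr_of_eventuallyEq hlocal.symm).congr_deriv ?_
  rw [expq, max_eq_left ht.le, ← Real.rpow_mul ht.le, mul_assoc,
    one_div_mul_cancel h1q, mul_one]
  congr 1
  field_simp
  ring

lemma deriv_breg_generator_logq {q u : ℝ} (hq : q ≠ 1) (hu : 0 < u) :
    deriv (fun r => (1 / q) * (expq q r - r - 1)) (logq q u) = (1 / q) * (u ^ q - 1) := by
  have hpos : 0 < 1 + (1 - q) * logq q u := by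
    rw [one_add_mul_logq hq]
    exact Real.rpow_pos_of_pos hu _
  have h := (((hasDerivAt_expq hq hpos).sub (hasDerivAt_id _)).sub_const 1).const_mul (1 / q)
  rw [expq_logq hq hu.le] at h
  simpa using h.deriv

/-- The Bregman divergence generated by `f(r) = (1/q)(exp_q r − r − 1)` in the
`log_q` representation is the pointwise Amari α-divergence integrand of order `q`. -/
theorem breg_logq_eq_amari_integrand (q : ℝ) (hq : q ∈ Set.Ioo (0:ℝ) 1)
    (a b : ℝ) (ha : 0 < a) (hb : 0 < b) :
    breg (fun r => (1 / q) * (expq q r - r - 1)) (logq q a) (logq q b) =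
      (1 / q) * a + (1 / (1 - q)) * b -
        (1 / (q * (1 - q))) * (a ^ (1 - q) * b ^ q) := by
  obtain ⟨hq0, hq1⟩ := hq
  have hq_ne : q ≠ 1 := hq1.ne
  have h1q : 1 - q ≠ 0 := sub_ne_zero.mpr hq_ne.symm
  have hb_split : b ^ q * b ^ (1 - q) = b := by
    rw [← Real.rpow_add hb, add_sub_cancel, Real.rpow_one]
  rw [breg, deriv_breg_generator_logq hq_ne hb, expq_logq hq_ne ha.le, expq_logq hq_ne hb.le,
    logq, logq]
  field_simp
  linear_combination hb_split
end

section
/- Fix q ∈ (0,1), probability densities π₀, π₁ > 0 on X with normalization constants Z(0), Z(1) of underlying unnormalized densities π̃₀ = Z(0)π₀, π̃₁ = Z(1)π₁, and β ∈ (0,1). Define β′ = β Z(1)^{q−1} / ((1−β) Z(0)^{q−1} + β Z(1)^{q−1}). Then pointwise for all x, the quasi-arithmetic q-mixture of the normalized densities is proportional to that of the unnormalized densities with reweighted parameter: exp_q((1−β) log_q π₀(x) + β log_q π₁(x)) = c⁻¹ · exp_q((1−β′) log_q π̃₀(x) + β′ log_q π̃₁(x)), where c = [(1−β) Z(0)^{−(1−q)}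 + β Z(1)^{−(1−q)}]^{−1/(1−q)}. -/
lemma expq_eq_rpow {q t : ℝ} (ht : 0 ≤ 1 + (1 - q) * t) :
    expq q t = (1 + (1 - q) * t) ^ (1 / (1 - q)) := by
  rw [expq, max_eq_left ht]

lemma expq_mix_logq {q : ℝ} (hq : q ≠ 1) (w u v : ℝ)
    (h : 0 ≤ (1 - w) * u ^ (1 - q) + w * v ^ (1 - q)) :
    expq q ((1 - w) * logq q u + w * logq q v) =
      ((1 - w) * u ^ (1 - q) + w * v ^ (1 - q)) ^ (1 / (1 - q)) := by
  have hmix : 1 + (1 - q) * ((1 - w) * logq q u + w * logq q v) =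
      (1 - w) * u ^ (1 - q) + w * v ^ (1 - q) := by
    rw [← one_add_mul_logq hq u, ← one_add_mul_logq hq v]
    ring
  rw [expq_eq_rpow (hmix ▸ h), hmix]

lemma mix_reweight {A B β U V : ℝ} (hA : A ≠ 0) (hB : B ≠ 0) (hs : (1 - β) * A + β * B ≠ 0) :
    (1 - β * B / ((1 - β) * A + β * B)) * (A⁻¹ * U) + β * B / ((1 - β) * A + β * B) * (B⁻¹ * V) =
      ((1 - β) * U + β * V) / ((1 - β) * A + β * B) := by
  field_simp
  ring

lemma mul_rpow_one_sub {Z u : ℝ} (hZ : 0 < Z) (hu : 0 ≤ u) (q : ℝ) :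
    (Z * u) ^ (1 - q) = (Z ^ (q - 1))⁻¹ * u ^ (1 - q) := by
  rw [Real.mul_rpow hZ.le hu, ← Real.rpow_neg hZ.le, neg_sub]

lemma inv_rpow_neg_mul_rpow_div {s M p : ℝ} (hs : 0 < s) (hM : 0 ≤ M) :
    (s ^ (-p))⁻¹ * (M / s) ^ p = M ^ p := by
  rw [Real.rpow_neg hs.le, inv_inv, ← Real.mul_rpow hs.le (div_nonneg hM hs.le),
    mul_div_cancel₀ _ hs.ne']

/-- The quasi-arithmetic q-mixture of normalized densities equals (pointwise) the
q-mixture of the unnormalized densities with reweighted mixing parameter `β′`,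
rescaled by `c = [(1−β)Z(0)^{−(1−q)} + βZ(1)^{−(1−q)}]^{−1/(1−q)}`. -/
theorem qMixture_normalized_vs_unnormalized {X : Type*} (q : ℝ)
    (hq : q ∈ Set.Ioo (0:ℝ) 1) (Z0 Z1 : ℝ) (hZ0 : 0 < Z0) (hZ1 : 0 < Z1)
    (β : ℝ) (hβ : β ∈ Set.Ioo (0:ℝ) 1)
    (π₀ π₁ : X → ℝ) (h0 : ∀ x, 0 < π₀ x) (h1 : ∀ x, 0 < π₁ x) :
    ∀ x : X,
      expq q ((1 - β) * logq q (π₀ x) + β * logq q (π₁ x)) =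
        (((1 - β) * Z0 ^ (-(1 - q)) + β * Z1 ^ (-(1 - q))) ^ (-(1 / (1 - q))))⁻¹ *
          expq q
            ((1 - β * Z1 ^ (q - 1) / ((1 - β) * Z0 ^ (q - 1) + β * Z1 ^ (q - 1))) *
                logq q (Z0 * π₀ x) +
              (β * Z1 ^ (q - 1) / ((1 - β) * Z0 ^ (q - 1) + β * Z1 ^ (q - 1))) *
                logq q (Z1 * π₁ x)) := by
  intro x
  have hq1 : q ≠ 1 := hq.2.ne
  obtain ⟨hβ0, hβ1⟩ := hβ
  have hβ' : 0 < 1 - β := sub_pos.mpr hβ1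
  have hA : 0 < Z0 ^ (q - 1) := Real.rpow_pos_of_pos hZ0 _
  have hB : 0 < Z1 ^ (q - 1) := Real.rpow_pos_of_pos hZ1 _
  have hs : 0 < (1 - β) * Z0 ^ (q - 1) + β * Z1 ^ (q - 1) := by positivity
  have hM : 0 ≤ (1 - β) * π₀ x ^ (1 - q) + β * π₁ x ^ (1 - q) := by
    have := h0 x
    have := h1 x
    positivity
  have hreweight := mix_reweight (U := π₀ x ^ (1 - q)) (V := π₁ x ^ (1 - q)) hA.ne' hB.ne' hs.ne'
  rw [← mul_rpow_one_sub hZ0 (h0 x).le, ← mul_rpow_one_sub hZ1 (h1 x).le] at hreweight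
  rw [neg_sub, expq_mix_logq hq1 _ _ _ hM, expq_mix_logq hq1 _ _ _ (hreweight ▸ div_nonneg hM hs.le),
    hreweight, inv_rpow_neg_mul_rpow_div hs hM]
end
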